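/- Fix any z ∈ 𝒜 and define φ : 𝒜 → ℝ by φ(a) = ∫₀¹ Σ_{j=1}^N (∂u_j/∂a_j)(z + r(a − z)) · (a_j − z_j) dr, and let α = (a_δ²/2) · max over players i and action profiles a ∈ 𝒜 of Σ_{j=1}^N |(∂²u_i/∂a_i∂a_j)(a) − (∂²u_j/∂a_j∂a_i)(a)|. Then φ is differentiable and for every player i and every a ∈ 𝒜, |(∂φ/∂a_i)(a) − (∂u_i/∂a_i)(a)| ≤ α/a_δ. -/

import Mathlib

/-!
Write `g_j = ∂u_j/∂a_j` and `L r = z + r (a - z)`, so that `φ(a) = ∫₀¹ Σ_j g_j(L r) (a_j - z_j) dr`.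
Differentiating under the integral sign,
`∂_i φ(a) = ∫₀¹ (g_i(L r) + r Σ_j (a_j - z_j) ∂_i g_j(L r)) dr`, while the fundamental theorem of
calculus for `r ↦ r g_i(L r)` gives `g_i(a) = ∫₀¹ (g_i(L r) + r Σ_j (a_j - z_j) ∂_j g_i(L r)) dr`.
Hence `∂_i φ(a) - g_i(a) = ∫₀¹ r Σ_j (a_j - z_j) (∂_i g_j - ∂_j g_i)(L r) dr`. The segment `L`
stays in the convex box `𝒜`, `|a_j - z_j| ≤ a_δ` and `∫₀¹ r dr = 1/2`, so the difference is at
most `a_δ M / 2 = α / a_δ` (also when `a_δ = 0`, since `x / 0 = 0`), where `M` is the maximal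
asymmetry of the Hessians.
-/

open Function

/-- Partial derivative of `f : ℝ^N → ℝ` with respect to coordinate `j` at the point `a`. -/
noncomputable def pd {N : ℕ} (j : Fin N) (f : (Fin N → ℝ) → ℝ) (a : Fin N → ℝ) : ℝ :=
  deriv (fun t => f (Function.update a j t)) (a j)

open MeasureTheory Set

theorem hasFDerivAt_intervalIntegral_of_continuous {E F : Type*}
    [NormedAddCommGroup E] [NormedSpace ℝ E] [ProperSpace E]
    [NormedAddCommGroup F] [NormedSpace ℝ F]
    {f : E → ℝ → F} {f' : E → ℝ → E →L[ℝ] F}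
    (hf : Continuous (uncurry f)) (hf' : Continuous (uncurry f'))
    (hff' : ∀ x t, HasFDerivAt (f · t) (f' x t) x) (a b : ℝ) (x₀ : E) :
    HasFDerivAt (fun x => ∫ t in a..b, f x t) (∫ t in a..b, f' x₀ t) x₀ := by
  obtain ⟨C, hC⟩ := ((isCompact_closedBall x₀ 1).prod isCompact_uIcc).exists_bound_of_continuousOn
    hf'.continuousOn
  refine intervalIntegral.hasFDerivAt_integral_of_dominated_of_fderiv_le (bound := fun _ => C)
    (Metric.ball_mem_nhds x₀ one_pos)
    (.of_forall fun x => (hf.uncurry_left x).aestronglyMeasurable)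
    ((hf.uncurry_left x₀).intervalIntegrable a b)
    (hf'.uncurry_left x₀).aestronglyMeasurable
    (ae_of_all _ fun t ht x hx => hC (x, t) ⟨Metric.ball_subset_closedBall hx, uIoc_subset_uIcc ht⟩)
    intervalIntegrable_const (ae_of_all _ fun t _ x _ => hff' x t)

theorem integral_radial_fderiv_eq {E F : Type*}
    [NormedAddCommGroup E] [NormedSpace ℝ E] [NormedAddCommGroup F] [NormedSpace ℝ F]
    [CompleteSpace F] {f : E → F} (hf : ContDiff ℝ 1 f) (z a : E) :
    ∫ r in (0:ℝ)..1, (f (z + r • (a - z)) + r • fderiv ℝ f (z + r • (a - z)) (a - z)) = f a := by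
  have hseg : ∀ r : ℝ, HasDerivAt (fun s : ℝ => z + s • (a - z)) (a - z) r := fun r => by
    simpa using ((hasDerivAt_id r).smul_const (a - z)).const_add z
  have hderiv : ∀ r : ℝ, HasDerivAt (fun s : ℝ => s • f (z + s • (a - z)))
      (f (z + r • (a - z)) + r • fderiv ℝ f (z + r • (a - z)) (a - z)) r := fun r => by
    have hcomp : HasDerivAt (fun s : ℝ => f (z + s • (a - z)))
        (fderiv ℝ f (z + r • (a - z)) (a - z)) r :=
      (hf.differentiable one_ne_zero _).hasFDerivAt.comp_hasDerivAt r (hseg r)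
    simpa only [one_smul, add_comm] using (hasDerivAt_id' r).fun_smul hcomp
  have hcont : Continuous fun r : ℝ =>
      f (z + r • (a - z)) + r • fderiv ℝ f (z + r • (a - z)) (a - z) := by
    have hL : Continuous fun r : ℝ => z + r • (a - z) := by fun_prop
    exact (hf.continuous.comp hL).add
      (continuous_id.smul (((hf.continuous_fderiv one_ne_zero).comp hL).clm_apply continuous_const))
  rw [intervalIntegral.integral_eq_sub_of_hasDerivAt (fun r _ => hderiv r)
    (hcont.intervalIntegrable 0 1)]
  simp

section Partials

variable {N : ℕ}

theorem pd_eq_fderiv (j : Fin N) {f : (Fin N → ℝ) → ℝ} {a : Fin N → ℝ}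
    (hf : DifferentiableAt ℝ f a) : pd j f a = fderiv ℝ f a (Pi.single j 1) := by
  have hf' : HasFDerivAt f (fderiv ℝ f a) (update a j (a j)) := by
    rw [update_eq_self]; exact hf.hasFDerivAt
  exact (hf'.comp_hasDerivAt (a j) (hasDerivAt_update a j (a j))).deriv

theorem contDiff_pd (j : Fin N) {f : (Fin N → ℝ) → ℝ} {n : WithTop ℕ∞}
    (hf : ContDiff ℝ (n + 1) f) : ContDiff ℝ n (pd j f) := by
  have hd : Differentiable ℝ f := hf.differentiable (by simp)
  rw [show pd j f = fun a => fderiv ℝ f a (Pi.single j 1) from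
    funext fun a => pd_eq_fderiv j (hd a)]
  exact (hf.fderiv_right le_rfl).clm_apply contDiff_const

theorem fderiv_apply_eq_sum_pd {f : (Fin N → ℝ) → ℝ} {a : Fin N → ℝ}
    (hf : DifferentiableAt ℝ f a) (v : Fin N → ℝ) :
    fderiv ℝ f a v = ∑ j, v j * pd j f a := by
  conv_lhs => rw [pi_eq_sum_univ' v, map_sum]
  simp only [map_smul, smul_eq_mul, pd_eq_fderiv _ hf]

theorem continuous_pd (j : Fin N) {f : (Fin N → ℝ) → ℝ} (hf : ContDiff ℝ 1 f) :
    Continuous (pd j f) :=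
  (contDiff_pd j (n := 0) (by simpa using hf)).continuous

end Partials

section LinePotential

variable {N : ℕ} {g : Fin N → (Fin N → ℝ) → ℝ}

noncomputable def linePotential (g : Fin N → (Fin N → ℝ) → ℝ) (z a : Fin N → ℝ) : ℝ :=
  ∫ r in (0:ℝ)..1, ∑ j, g j (z + r • (a - z)) * (a j - z j)

theorem hasFDerivAt_linePotential_integrand (hg : ∀ j, Differentiable ℝ (g j))
    (z a : Fin N → ℝ) (r : ℝ) :
    HasFDerivAt (fun b => ∑ j, g j (z + r • (b - z)) * (b j - z j))
      (∑ j, (g j (z + r • (a - z)) • ContinuousLinearMap.proj j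
        + (a j - z j) • r • fderiv ℝ (g j) (z + r • (a - z)))) a := by
  have hseg : HasFDerivAt (fun b => z + r • (b - z)) (r • ContinuousLinearMap.id ℝ _) a :=
    (((hasFDerivAt_id a).sub_const z).const_smul r).const_add z
  refine HasFDerivAt.fun_sum fun j _ => ?_
  have hcomp := (hg j _).hasFDerivAt.comp a hseg
  rw [ContinuousLinearMap.comp_smul, ContinuousLinearMap.comp_id] at hcomp
  exact hcomp.mul ((hasFDerivAt_apply j a).sub_const (z j))

variable (hg : ∀ j, ContDiff ℝ 1 (g j)) (z : Fin N → ℝ)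
include hg

theorem hasFDerivAt_linePotential (a : Fin N → ℝ) :
    HasFDerivAt (linePotential g z)
      (∫ r in (0:ℝ)..1, ∑ j, (g j (z + r • (a - z)) • ContinuousLinearMap.proj j
        + (a j - z j) • r • fderiv ℝ (g j) (z + r • (a - z)))) a := by
  have hgc : ∀ j, Continuous (g j) := fun j => (hg j).continuous
  have hg' : ∀ j, Continuous (fderiv ℝ (g j)) := fun j => (hg j).continuous_fderiv one_ne_zero
  refine hasFDerivAt_intervalIntegral_of_continuous ?_ ?_
    (hasFDerivAt_linePotential_integrand (fun j => (hg j).differentiable one_ne_zero) z) 0 1 a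
  all_goals fun_prop

theorem differentiable_linePotential : Differentiable ℝ (linePotential g z) :=
  fun a => (hasFDerivAt_linePotential hg z a).differentiableAt

theorem pd_linePotential (i : Fin N) (a : Fin N → ℝ) :
    pd i (linePotential g z) a = ∫ r in (0:ℝ)..1,
      (g i (z + r • (a - z)) + r * ∑ j, (a j - z j) * pd i (g j) (z + r • (a - z))) := by
  have hgc : ∀ j, Continuous (g j) := fun j => (hg j).continuous
  have hg' : ∀ j, Continuous (fderiv ℝ (g j)) := fun j => (hg j).continuous_fderiv one_ne_zero
  have hD := hasFDerivAt_linePotential hg z a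
  rw [pd_eq_fderiv i hD.differentiableAt, hD.fderiv,
    ContinuousLinearMap.intervalIntegral_apply (Continuous.intervalIntegrable (by fun_prop) 0 1)]
  refine intervalIntegral.integral_congr fun r _ => ?_
  simp only [Finset.sum_add_distrib, add_apply, sum_apply,
    smul_apply, ContinuousLinearMap.proj_apply, Pi.single_apply, smul_eq_mul,
    mul_ite, mul_one, mul_zero, Finset.sum_ite_eq', Finset.mem_univ, ite_true,
    pd_eq_fderiv i ((hg _).differentiable one_ne_zero _), Finset.mul_sum, add_right_inj]
  exact Finset.sum_congr rfl fun j _ => by ring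

theorem pd_linePotential_sub_eq (i : Fin N) (a : Fin N → ℝ) :
    pd i (linePotential g z) a - g i a = ∫ r in (0:ℝ)..1,
      r * ∑ j, (a j - z j) * (pd i (g j) (z + r • (a - z)) - pd j (g i) (z + r • (a - z))) := by
  have hgc : ∀ j, Continuous (g j) := fun j => (hg j).continuous
  have hg' : ∀ j, Continuous (fderiv ℝ (g j)) := fun j => (hg j).continuous_fderiv one_ne_zero
  have hpd : ∀ i j, Continuous (pd i (g j)) := fun i j => continuous_pd i (hg j)
  rw [pd_linePotential hg z, ← integral_radial_fderiv_eq (hg i) z a,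
    ← intervalIntegral.integral_sub (Continuous.intervalIntegrable (by fun_prop) 0 1)
      (Continuous.intervalIntegrable (by fun_prop) 0 1)]
  refine intervalIntegral.integral_congr fun r _ => ?_
  rw [fderiv_apply_eq_sum_pd ((hg i).differentiable one_ne_zero _), smul_eq_mul]
  simp only [Pi.sub_apply, mul_sub, Finset.sum_sub_distrib, Finset.mul_sum]
  ring

theorem abs_pd_linePotential_sub_le {δ M : ℝ} (i : Fin N) {a : Fin N → ℝ}
    (hδ : ∀ j, |a j - z j| ≤ δ)
    (hM : ∀ r ∈ Icc (0:ℝ) 1,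
      ∑ j, |pd j (g i) (z + r • (a - z)) - pd i (g j) (z + r • (a - z))| ≤ M) :
    |pd i (linePotential g z) a - g i a| ≤ δ * M / 2 := by
  have hδ0 : 0 ≤ δ := (abs_nonneg _).trans (hδ i)
  have hpt : ∀ r ∈ Ioc (0:ℝ) 1, ‖r * ∑ j, (a j - z j) *
      (pd i (g j) (z + r • (a - z)) - pd j (g i) (z + r • (a - z)))‖ ≤ r * (δ * M) := by
    intro r hr
    rw [Real.norm_eq_abs, abs_mul, abs_of_pos hr.1]
    refine mul_le_mul_of_nonneg_left ?_ hr.1.le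
    calc _ ≤ ∑ j, |a j - z j| * |pd i (g j) (z + r • (a - z)) - pd j (g i) (z + r • (a - z))| :=
          (Finset.abs_sum_le_sum_abs _ _).trans_eq (Finset.sum_congr rfl fun j _ => abs_mul _ _)
      _ ≤ ∑ j, δ * |pd i (g j) (z + r • (a - z)) - pd j (g i) (z + r • (a - z))| := by
          gcongr with j; exact hδ j
      _ ≤ δ * M := by
          simp only [← Finset.mul_sum, abs_sub_comm (pd i _ _)]
          exact mul_le_mul_of_nonneg_left (hM r (Ioc_subset_Icc_self hr)) hδ0
  rw [pd_linePotential_sub_eq hg z, ← Real.norm_eq_abs]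
  calc _ ≤ ∫ r in (0:ℝ)..1, r * (δ * M) :=
        intervalIntegral.norm_integral_le_of_norm_le zero_le_one (ae_of_all _ hpt)
          (Continuous.intervalIntegrable (by fun_prop) 0 1)
    _ = δ * M / 2 := by
        rw [intervalIntegral.integral_mul_const, integral_id]; ring

end LinePotential

theorem IsCompact.bddAbove_setOf_exists_eq_apply {ι X : Type*} [Finite ι] [TopologicalSpace X]
    {K : Set X} (hK : IsCompact K) {h : ι → X → ℝ} (hh : ∀ i, ContinuousOn (h i) K) :
    BddAbove {x : ℝ | ∃ i, ∃ a ∈ K, x = h i a} := by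
  choose C hC using fun i => hK.bddAbove_image (hh i)
  obtain ⟨D, hD⟩ := Finite.bddAbove_range C
  refine ⟨D, ?_⟩
  rintro _ ⟨i, a, ha, rfl⟩
  exact (hC i (mem_image_of_mem _ ha)).trans (hD (mem_range_self i))

theorem abs_sub_le_sSup_of_mem_pi_Icc {ι : Type*} [Finite ι] {lo hi a z : ι → ℝ}
    (ha : a ∈ univ.pi fun i => Icc (lo i) (hi i)) (hz : z ∈ univ.pi fun i => Icc (lo i) (hi i))
    (j : ι) :
    |a j - z j| ≤ sSup {d : ℝ | ∃ i, ∃ x ∈ Icc (lo i) (hi i), ∃ y ∈ Icc (lo i) (hi i),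
      d = |x - y|} := by
  obtain ⟨D, hD⟩ := Finite.bddAbove_range fun i => hi i - lo i
  refine le_csSup ⟨D, ?_⟩ ⟨j, _, ha j trivial, _, hz j trivial, rfl⟩
  rintro _ ⟨i, x, hx, y, hy, rfl⟩
  exact (Real.dist_le_of_mem_Icc hx hy).trans (hD (mem_range_self i))

theorem alpha_potential_gradient_relation_general
    {N : ℕ}
    (lo hi : Fin N → ℝ)
    (u : Fin N → (Fin N → ℝ) → ℝ) (hu : ∀ i, ContDiff ℝ 2 (u i))
    (A : Set (Fin N → ℝ))
    (hA : A = Set.univ.pi fun i => Set.Icc (lo i) (hi i))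
    (aδ : ℝ)
    (haδ : aδ = sSup {d : ℝ | ∃ i : Fin N, ∃ x ∈ Set.Icc (lo i) (hi i),
      ∃ y ∈ Set.Icc (lo i) (hi i), d = |x - y|})
    (z : Fin N → ℝ) (hz : z ∈ A)
    (φ : (Fin N → ℝ) → ℝ)
    (hφ : ∀ a, φ a =
      ∫ r in (0:ℝ)..1, ∑ j, pd j (u j) (fun k => z k + r * (a k - z k)) * (a j - z j))
    (α : ℝ)
    (hα : α = aδ ^ 2 / 2 *
      sSup {x : ℝ | ∃ i : Fin N, ∃ a ∈ A,
        x = ∑ j, |pd j (pd i (u i)) a - pd i (pd j (u j)) a|}) :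
    Differentiable ℝ φ ∧
    ∀ i : Fin N, ∀ a ∈ A, |pd i φ a - pd i (u i) a| ≤ α / aδ := by
  subst hA
  set g : Fin N → (Fin N → ℝ) → ℝ := fun j => pd j (u j)
  have hg : ∀ j, ContDiff ℝ 1 (g j) := fun j =>
    contDiff_pd j (by simpa [one_add_one_eq_two] using hu j)
  have hpd : ∀ i j, Continuous (pd i (g j)) := fun i j => continuous_pd i (hg j)
  have hφg : φ = linePotential g z := funext fun a => by rw [hφ]; rfl
  set M := sSup {x : ℝ | ∃ i : Fin N, ∃ a ∈ univ.pi fun i => Icc (lo i) (hi i),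
        x = ∑ j, |pd j (pd i (u i)) a - pd i (pd j (u j)) a|}
  have hαM : α / aδ = aδ * M / 2 := by
    rw [hα]; linear_combination (M / 2) * mul_self_div_self aδ
  have hM : ∀ i, ∀ a ∈ univ.pi fun i => Icc (lo i) (hi i),
      ∑ j, |pd j (g i) a - pd i (g j) a| ≤ M := fun i a ha =>
    le_csSup ((isCompact_univ_pi fun i => isCompact_Icc).bddAbove_setOf_exists_eq_apply
      fun i => (by fun_prop : Continuous fun a => ∑ j, |pd j (g i) a - pd i (g j) a|).continuousOn)
      ⟨i, a, ha, rfl⟩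
  refine ⟨hφg ▸ differentiable_linePotential hg z, fun i a ha => ?_⟩
  rw [hαM, hφg]
  exact abs_pd_linePotential_sub_le hg z i (haδ ▸ abs_sub_le_sSup_of_mem_pi_Icc ha hz)
    fun r hr => hM i _ ((convex_pi fun i _ => convex_Icc (lo i) (hi i)).add_smul_sub_mem hz ha hr)

/-- Fix `z ∈ 𝒜` and define `φ(a) = ∫₀¹ Σ_j (∂u_j/∂a_j)(z + r(a − z)) · (a_j − z_j) dr`, and let
`α = (a_δ²/2) · max_{i, a ∈ 𝒜} Σ_j |(∂²u_i/∂a_i∂a_j)(a) − (∂²u_j/∂a_j∂a_i)(a)|`.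
Then `φ` is differentiable and for every player `i` and every `a ∈ 𝒜`,
`|(∂φ/∂a_i)(a) − (∂u_i/∂a_i)(a)| ≤ α/a_δ`. -/
theorem alpha_potential_gradient_relation
    {N : ℕ} (hN : 0 < N)
    (lo hi : Fin N → ℝ) (hlohi : ∀ i, lo i ≤ hi i)
    (u : Fin N → (Fin N → ℝ) → ℝ) (hu : ∀ i, ContDiff ℝ 2 (u i))
    (A : Set (Fin N → ℝ))
    (hA : A = Set.univ.pi fun i => Set.Icc (lo i) (hi i))
    (aδ : ℝ)
    (haδ : aδ = sSup {d : ℝ | ∃ i : Fin N, ∃ x ∈ Set.Icc (lo i) (hi i),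
      ∃ y ∈ Set.Icc (lo i) (hi i), d = |x - y|})
    (z : Fin N → ℝ) (hz : z ∈ A)
    (φ : (Fin N → ℝ) → ℝ)
    (hφ : ∀ a, φ a =
      ∫ r in (0:ℝ)..1, ∑ j, pd j (u j) (fun k => z k + r * (a k - z k)) * (a j - z j))
    (α : ℝ)
    (hα : α = aδ ^ 2 / 2 *
      sSup {x : ℝ | ∃ i : Fin N, ∃ a ∈ A,
        x = ∑ j, |pd j (pd i (u i)) a - pd i (pd j (u j)) a|}) :
    Differentiable ℝ φ ∧
    ∀ i : Fin N, ∀ a ∈ A, |pd i φ a - pd i (u i) a| ≤ α / aδ :=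
  alpha_potential_gradient_relation_general lo hi u hu A hA aδ haδ z hz φ hφ α hα
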